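/- arXiv:1905.02126 — 3 statements merged into one kernel-verified Lean document; each statement's English description precedes it below -/
import Mathlib

section
/- Let u_ε be the solution of the Bingham variational inequality in Ω_ε with forces f_ε satisfying ε^{-1/2}‖f_ε‖_{L²(Ω_ε)} ≤ C. Then there exists C' > 0 independent of ε such that ε·ε^{-1/2}‖∇u_ε‖_{L²(Ω_ε)} ≤ C' and ε^{-1/2}‖u_ε‖_{L²(Ω_ε)} ≤ C'. -/
open MeasureTheory Set Filter
open scoped Classical
noncomputable section

abbrev V3 := Fin 3 → ℝ
abbrev V2 := Fin 2 → ℝ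

/-- Partial derivative in direction `i` of a scalar function on `ℝ³`. -/
def pd3 (i : Fin 3) (f : V3 → ℝ) (x : V3) : ℝ := fderiv ℝ f x (Pi.single i 1)

/-- Partial derivative in direction `i` of a scalar function on `ℝ²`. -/
def pd2 (i : Fin 2) (f : V2 → ℝ) (x : V2) : ℝ := fderiv ℝ f x (Pi.single i 1)

/-- Squared euclidean norm of a vector field at a point. -/
def vnormSq (u : V3 → V3) (x : V3) : ℝ := ∑ i, (u x i) ^ 2

/-- Squared Frobenius norm of the gradient matrix of a vector field. -/
def gradSq (u : V3 → V3) (x : V3) : ℝ := ∑ i, ∑ j, (pd3 j (fun z => u z i) x) ^ 2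

/-- Pointwise Frobenius norm `|∇u|`. -/
def gradNorm (u : V3 → V3) (x : V3) : ℝ := Real.sqrt (gradSq u x)

/-- Pointwise inner product `∇u · ∇v` of two gradient matrices. -/
def gradInner (u v : V3 → V3) (x : V3) : ℝ :=
  ∑ i, ∑ j, pd3 j (fun z => u z i) x * pd3 j (fun z => v z i) x

/-- Divergence of a vector field. -/
def divg (u : V3 → V3) (x : V3) : ℝ := ∑ i, pd3 i (fun z => u z i) x

/-- The unit square `ω = (0,1)²`. -/
def omega2 : Set V2 := {x | 0 < x 0 ∧ x 0 < 1 ∧ 0 < x 1 ∧ x 1 < 1}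

/-- Horizontal projection `x̂` of a point of `ℝ³`. -/
def hat (x : V3) : V2 := ![x 0, x 1]

/-- The thin domain `Ω_ε = {(x̂,x₃) : x̂ ∈ ω, 0 < x₃ < εG(x̂/ε)}`. -/
def thinDom (ε : ℝ) (G : V2 → ℝ) : Set V3 :=
  {x | hat x ∈ omega2 ∧ 0 < x 2 ∧ x 2 < ε * G ![x 0 / ε, x 1 / ε]}

/-- The basic cell `Y* = {(ŷ,y₃) : ŷ ∈ (0,L₁)×(0,L₂), 0 < y₃ < G(ŷ)}`. -/
def Ystar (L1 L2 : ℝ) (G : V2 → ℝ) : Set V3 :=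
  {y | 0 < y 0 ∧ y 0 < L1 ∧ 0 < y 1 ∧ y 1 < L2 ∧ 0 < y 2 ∧ y 2 < G ![y 0, y 1]}

/-- `Y`-periodicity of `G` with periods `L₁, L₂`. -/
def Yper (L1 L2 : ℝ) (G : V2 → ℝ) : Prop :=
  ∀ (y : V2) (k : Fin 2 → ℤ), G (fun i => y i + (k i : ℝ) * ![L1, L2] i) = G y

/-- The `ε`-cell containing `x̂` is entirely included in `ω=(0,1)²` (that is, `x̂ ∈ ω^ε`). -/
def cellOK (ε L1 L2 : ℝ) (xh : V2) : Prop :=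
  0 ≤ ⌊xh 0 / (ε * L1)⌋ ∧ 0 ≤ ⌊xh 1 / (ε * L2)⌋ ∧
    ε * L1 * ((⌊xh 0 / (ε * L1)⌋ : ℝ) + 1) ≤ 1 ∧
    ε * L2 * ((⌊xh 1 / (ε * L2)⌋ : ℝ) + 1) ≤ 1

/-- The unfolding operator `T_ε(φ)(x̂,y) = φ(ε[x̂/ε]_L L + εŷ, εy₃)` on `ω^ε × Y*`, `0` on `Λ^ε × Y*`. -/
def Tunf (ε L1 L2 : ℝ) (φ : V3 → ℝ) (xh : V2) (y : V3) : ℝ :=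
  if cellOK ε L1 L2 xh then
    φ ![ε * ((⌊xh 0 / (ε * L1)⌋ : ℝ) * L1 + y 0),
        ε * ((⌊xh 1 / (ε * L2)⌋ : ℝ) * L2 + y 1), ε * y 2]
  else 0

/-- Union of the cells entirely included in `Ω_ε`. -/
def thinDom0 (ε L1 L2 : ℝ) (G : V2 → ℝ) : Set V3 :=
  {x ∈ thinDom ε G | cellOK ε L1 L2 (hat x)}

/-!
Testing the variational inequality with `v = 0` gives the energy inequality
`μ ε² ‖∇u‖² ≤ ∫ f·u`. Young's inequality and the `ε`-scaled Poincaré inequality bound `∫ f·u`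
by a multiple of `ε |||f|||²` plus half of `μ ε² ‖∇u‖²`, so `ε ‖∇u‖²` is bounded independently
of `ε`, and Poincaré once more bounds `ε⁻¹ ‖u‖²`. As `G` is bounded above, `Ω_ε` is bounded,
which makes `|u|²` and `|∇u|²` integrable.
-/

lemma thinDom_isBounded {ε G1 : ℝ} {G : V2 → ℝ} (hε : 0 ≤ ε) (hG : ∀ y, G y ≤ G1) :
    Bornology.IsBounded (thinDom ε G) := by
  refine (Metric.isBounded_Icc (0 : V3) ![1, 1, ε * G1]).subset
    fun x ⟨⟨h0, h0', h1, h1'⟩, h2, h2'⟩ => ?_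
  simp only [hat, Matrix.cons_val_zero, Matrix.cons_val_one] at h0 h0' h1 h1'
  have hx2 : x 2 ≤ ε * G1 := h2'.le.trans (mul_le_mul_of_nonneg_left (hG _) hε)
  constructor <;> intro i <;> fin_cases i <;> simp <;> linarith

lemma HasCompactSupport.of_tsupport_subset_isBounded {f : V3 → ℝ} {s : Set V3}
    (hs : Bornology.IsBounded s) (hf : tsupport f ⊆ s) : HasCompactSupport f :=
  Metric.isCompact_of_isClosed_isBounded (isClosed_tsupport f) (hs.subset hf)

lemma continuous_pd3 {f : V3 → ℝ} (hf : ContDiff ℝ 1 f) (j : Fin 3) : Continuous (pd3 j f) :=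
  (hf.continuous_fderiv one_ne_zero).clm_apply continuous_const

lemma HasCompactSupport.pd3 {f : V3 → ℝ} (hf : HasCompactSupport f) (j : Fin 3) :
    HasCompactSupport (pd3 j f) :=
  hf.fderiv_apply ℝ _

lemma Continuous.integrable_sq_of_hasCompactSupport {f : V3 → ℝ} (hf : Continuous f)
    (hcs : HasCompactSupport f) : Integrable fun x => f x ^ 2 :=
  (hf.pow 2).integrable_of_hasCompactSupport (hcs.comp_left (zero_pow two_ne_zero))

lemma integrable_vnormSq {u : V3 → V3} (hu : Continuous u)
    (hcs : ∀ i, HasCompactSupport fun x => u x i) : Integrable (vnormSq u) :=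
  integrable_finsetSum _ fun i _ =>
    ((continuous_apply i).comp hu).integrable_sq_of_hasCompactSupport (hcs i)

lemma integrable_gradSq {u : V3 → V3} (hu : ContDiff ℝ 1 u)
    (hcs : ∀ i, HasCompactSupport fun x => u x i) : Integrable (gradSq u) :=
  integrable_finsetSum _ fun i _ => integrable_finsetSum _ fun j _ =>
    (continuous_pd3 (contDiff_pi.mp hu i) j).integrable_sq_of_hasCompactSupport ((hcs i).pd3 j)

lemma gradInner_neg_right (u v : V3 → V3) (x : V3) :
    gradInner u (fun z => -v z) x = -gradInner u v x := by
  simp only [gradInner, pd3, Pi.neg_apply, fderiv_fun_neg, neg_apply,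
    mul_neg, Finset.sum_neg_distrib]

lemma gradInner_self (u : V3 → V3) (x : V3) : gradInner u u x = gradSq u x := by
  simp only [gradInner, gradSq, sq]

lemma gradNorm_const (c : V3) (x : V3) : gradNorm (fun _ => c) x = 0 := by
  simp [gradNorm, gradSq, pd3]

lemma divg_const (c : V3) (x : V3) : divg (fun _ => c) x = 0 := by
  simp [divg, pd3]

lemma vnormSq_nonneg (u : V3 → V3) (x : V3) : 0 ≤ vnormSq u x :=
  Finset.sum_nonneg fun i _ => sq_nonneg (u x i)

lemma gradSq_nonneg (u : V3 → V3) (x : V3) : 0 ≤ gradSq u x :=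
  Finset.sum_nonneg fun _ _ => Finset.sum_nonneg fun _ _ => sq_nonneg _

lemma setIntegral_sum_mul_le_young {s : Set V3} {u f : V3 → V3} {t : ℝ} (ht : 0 < t)
    (hf : IntegrableOn (vnormSq f) s) (hu : IntegrableOn (vnormSq u) s) :
    2 * ∫ x in s, ∑ i, f x i * u x i
      ≤ t * (∫ x in s, vnormSq f x) + t⁻¹ * ∫ x in s, vnormSq u x := by
  by_cases hfu : IntegrableOn (fun x => ∑ i, f x i * u x i) s
  · rw [← integral_const_mul, ← integral_const_mul, ← integral_const_mul,
      ← integral_add (hf.const_mul t) (hu.const_mul t⁻¹)]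
    refine integral_mono (hfu.const_mul 2) ((hf.const_mul t).add (hu.const_mul t⁻¹)) fun x => ?_
    simp only [vnormSq, Finset.mul_sum, ← Finset.sum_add_distrib, ← mul_assoc]
    exact Finset.sum_le_sum fun i _ => two_mul_le_add_mul_sq ht
  · rw [integral_undef hfu, mul_zero]
    have hF : 0 ≤ ∫ x in s, vnormSq f x := integral_nonneg (vnormSq_nonneg f)
    have hU : 0 ≤ ∫ x in s, vnormSq u x := integral_nonneg (vnormSq_nonneg u)
    positivity

/- In the variational inequality each `∫` extends to the end of the expression, so the two
plasticity terms sit inside the first integral as constants; for `v = 0` they only add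
`-μ ε⁴ g² |s|² ∫ |∇u|`, which has the right sign. -/
lemma bingham_energy_le {s : Set V3} (hs : volume s < ⊤) {μ g ε : ℝ} (hμ : 0 ≤ μ)
    {u f : V3 → V3} (hu : IntegrableOn (gradSq u) s)
    (hVI : μ * ε ^ 2 * ∫ x in s, gradInner u (fun z => 0 - u z) x
          + g * ε * ∫ x in s, gradNorm (fun _ => 0) x
          - g * ε * ∫ x in s, gradNorm u x
        ≥ ∫ x in s, ∑ i, f x i * (0 - u x i)) :
    μ * ε ^ 2 * ∫ x in s, gradSq u x ≤ ∫ x in s, ∑ i, f x i * u x i := by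
  set N := ∫ x in s, gradNorm u x
  have hN : 0 ≤ N := integral_nonneg fun x => Real.sqrt_nonneg _
  have hplast :
      ∫ x in s, (gradNorm (fun _ => 0) x - g * ε * N) = -(volume.real s * (g * ε * N)) := by
    simp only [gradNorm_const, zero_sub, setIntegral_const, smul_eq_mul, mul_neg]
  have hlhs : ∫ x in s, (gradInner u (fun z => 0 - u z) x
        + g * ε * ∫ y in s, (gradNorm (fun _ => 0) y - g * ε * N))
      = -(∫ x in s, gradSq u x) - volume.real s ^ 2 * (g * ε) ^ 2 * N := by
    simp only [hplast, zero_sub, gradInner_neg_right, gradInner_self]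
    rw [integral_add (f := fun x => -gradSq u x) hu.neg (integrableOn_const hs.ne), integral_neg,
      setIntegral_const, smul_eq_mul]
    ring
  have hrhs : ∫ x in s, ∑ i, f x i * (0 - u x i) = -∫ x in s, ∑ i, f x i * u x i := by
    simp only [zero_sub, mul_neg, Finset.sum_neg_distrib, integral_neg]
  rw [hlhs, hrhs] at hVI
  have : 0 ≤ μ * ε ^ 2 * (volume.real s ^ 2 * (g * ε) ^ 2 * N) := by positivity
  linarith

/- Young's inequality with weight `t = (1 + Cp²)/μ` makes the Poincaré term at most half of
the viscous energy `μ ε² A`, which then absorbs it. -/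
lemma scaled_energy_le_of_young_poincare {μ ε C Cp A B F I : ℝ} (hμ : 0 < μ) (hε : 0 < ε)
    (hA : 0 ≤ A) (henergy : μ * ε ^ 2 * A ≤ I) (hyoung : ∀ t > 0, 2 * I ≤ t * F + t⁻¹ * B)
    (hF : F ≤ ε * C ^ 2) (hP : B ≤ (ε * Cp) ^ 2 * A) :
    ε * A ≤ (1 + Cp ^ 2) * C ^ 2 / μ ^ 2 := by
  set t := (1 + Cp ^ 2) / μ
  have ht : 0 < t := by positivity
  have habsorb : t⁻¹ * B ≤ μ * ε ^ 2 * A := by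
    calc t⁻¹ * B ≤ t⁻¹ * ((ε * Cp) ^ 2 * A) := by gcongr
      _ = Cp ^ 2 / (1 + Cp ^ 2) * (μ * ε ^ 2 * A) := by simp only [t]; field_simp
      _ ≤ 1 * (μ * ε ^ 2 * A) := by
        gcongr
        exact (div_le_one (by positivity)).mpr (by linarith)
      _ = μ * ε ^ 2 * A := one_mul _
  have hmain : μ * ε * (ε * A) ≤ μ * ε * ((1 + Cp ^ 2) * C ^ 2 / μ ^ 2) := by
    have htF : t * F ≤ t * (ε * C ^ 2) := by gcongr
    have : t * (ε * C ^ 2) = μ * ε * ((1 + Cp ^ 2) * C ^ 2 / μ ^ 2) := by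
      simp only [t]; field_simp
    nlinarith [hyoung t ht]
  exact le_of_mul_le_mul_left hmain (by positivity)

lemma apriori_sq_bounds_of_young_poincare {μ ε C Cp A B F I : ℝ} (hμ : 0 < μ) (hε : 0 < ε)
    (hA : 0 ≤ A) (henergy : μ * ε ^ 2 * A ≤ I) (hyoung : ∀ t > 0, 2 * I ≤ t * F + t⁻¹ * B)
    (hF : F ≤ ε * C ^ 2) (hP : B ≤ (ε * Cp) ^ 2 * A) :
    ε * A ≤ ((1 + Cp ^ 2) * C / μ) ^ 2 ∧ ε⁻¹ * B ≤ ((1 + Cp ^ 2) * C / μ) ^ 2 := by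
  have hεA := scaled_energy_le_of_young_poincare hμ hε hA henergy hyoung hF hP
  set X := (1 + Cp ^ 2) * C ^ 2 / μ ^ 2
  have hX : ((1 + Cp ^ 2) * C / μ) ^ 2 = (1 + Cp ^ 2) * X := by simp only [X]; field_simp
  have hX0 : 0 ≤ X := by positivity
  have hεB : ε⁻¹ * B ≤ Cp ^ 2 * X := by
    calc ε⁻¹ * B ≤ ε⁻¹ * ((ε * Cp) ^ 2 * A) := by gcongr
      _ = Cp ^ 2 * (ε * A) := by field_simp
      _ ≤ Cp ^ 2 * X := by gcongr
  constructor <;> nlinarith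

lemma mul_sqrt_inv_mul {ε : ℝ} (hε : 0 < ε) (a : ℝ) : ε * √(ε⁻¹ * a) = √(ε * a) := by
  rw [← Real.sqrt_sq hε.le, ← Real.sqrt_mul (sq_nonneg ε), Real.sqrt_sq hε.le, ← mul_assoc, sq,
    mul_assoc ε ε, mul_inv_cancel₀ hε.ne', mul_one]

theorem bingham_apriori_estimates_general
    (G1 μ g C Cp : ℝ) (hμ : 0 < μ) (hC : 0 < C) (G : V2 → ℝ) (hGub : ∀ y, G y ≤ G1) :
    ∃ C' > (0 : ℝ), ∀ ε > (0 : ℝ), ∀ u f : V3 → V3,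
      -- u ∈ V_ε
      ContDiff ℝ 1 u →
      (∀ i, tsupport (fun x => u x i) ⊆ thinDom ε G) →
      (∀ x, divg u x = 0) →
      -- the force bound `|||f_ε|||_{L²} ≤ C`
      Real.sqrt (ε⁻¹ * ∫ x in thinDom ε G, vnormSq f x) ≤ C →
      IntegrableOn (fun x => vnormSq f x) (thinDom ε G) →
      -- the Poincaré inequality with ε-scaling and constant Cp
      (∀ φ : V3 → V3, ContDiff ℝ 1 φ →
        (∀ i, tsupport (fun x => φ x i) ⊆ thinDom ε G) →
        ∫ x in thinDom ε G, vnormSq φ x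
          ≤ (ε * Cp) ^ 2 * ∫ x in thinDom ε G, gradSq φ x) →
      -- the Bingham variational inequality
      (∀ v : V3 → V3, ContDiff ℝ 1 v →
        (∀ i, tsupport (fun x => v x i) ⊆ thinDom ε G) → (∀ x, divg v x = 0) →
        μ * ε ^ 2 * ∫ x in thinDom ε G, gradInner u (fun z => v z - u z) x
          + g * ε * ∫ x in thinDom ε G, gradNorm v x
          - g * ε * ∫ x in thinDom ε G, gradNorm u x
        ≥ ∫ x in thinDom ε G, ∑ i, f x i * (v x i - u x i)) →
      -- conclusions: `ε|||∇u_ε||| ≤ C'` and `|||u_ε||| ≤ C'`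
      ε * Real.sqrt (ε⁻¹ * ∫ x in thinDom ε G, gradSq u x) ≤ C'
        ∧ Real.sqrt (ε⁻¹ * ∫ x in thinDom ε G, vnormSq u x) ≤ C' := by
  refine ⟨(1 + Cp ^ 2) * C / μ, by positivity, fun ε hε u f hu hsupp _ hf hfint hP hVI => ?_⟩
  have hbdd := thinDom_isBounded hε.le hGub
  have hcs i := HasCompactSupport.of_tsupport_subset_isBounded hbdd (hsupp i)
  have hA := (integrable_gradSq hu hcs).integrableOn (s := thinDom ε G)
  have hB := (integrable_vnormSq hu.continuous hcs).integrableOn (s := thinDom ε G)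
  have henergy := bingham_energy_le hbdd.measure_lt_top hμ.le hA
    (hVI (fun _ => 0) contDiff_const (by simp) (divg_const 0))
  have hF : ∫ x in thinDom ε G, vnormSq f x ≤ ε * C ^ 2 :=
    (inv_mul_le_iff₀ hε).mp (Real.sqrt_le_iff.mp hf).2
  obtain ⟨hεA, hεB⟩ := apriori_sq_bounds_of_young_poincare hμ hε
    (integral_nonneg (gradSq_nonneg u)) henergy
    (fun t ht => setIntegral_sum_mul_le_young ht hfint hB) hF (hP u hu hsupp)
  rw [mul_sqrt_inv_mul hε]
  exact ⟨Real.sqrt_le_iff.mpr ⟨by positivity, hεA⟩, Real.sqrt_le_iff.mpr ⟨by positivity, hεB⟩⟩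

/-- a priori estimates: under the force bound
`ε^{-1/2}‖f_ε‖_{L²(Ω_ε)} ≤ C` and the scaled Poincaré inequality, the solution
of the Bingham variational inequality satisfies `ε·ε^{-1/2}‖∇u_ε‖ ≤ C'` and
`ε^{-1/2}‖u_ε‖ ≤ C'`, with `C'` independent of `ε`. -/
theorem bingham_apriori_estimates
    (L1 L2 G0 G1 μ g C Cp : ℝ) (hL1 : 0 < L1) (hL2 : 0 < L2) (hG0 : 0 < G0)
    (hμ : 0 < μ) (hg : 0 < g) (hC : 0 < C) (hCp : 0 < Cp)
    (G : V2 → ℝ) (hGcont : Continuous G) (hGper : Yper L1 L2 G)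
    (hGlb : ∀ y, G0 ≤ G y) (hGub : ∀ y, G y ≤ G1) :
    ∃ C' > (0 : ℝ), ∀ ε > (0 : ℝ), ∀ u f : V3 → V3,
      -- u ∈ V_ε
      ContDiff ℝ 1 u →
      (∀ i, tsupport (fun x => u x i) ⊆ thinDom ε G) →
      (∀ x, divg u x = 0) →
      -- the force bound `|||f_ε|||_{L²} ≤ C`
      Real.sqrt (ε⁻¹ * ∫ x in thinDom ε G, vnormSq f x) ≤ C →
      IntegrableOn (fun x => vnormSq f x) (thinDom ε G) →
      -- the Poincaré inequality with ε-scaling and constant Cp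
      (∀ φ : V3 → V3, ContDiff ℝ 1 φ →
        (∀ i, tsupport (fun x => φ x i) ⊆ thinDom ε G) →
        ∫ x in thinDom ε G, vnormSq φ x
          ≤ (ε * Cp) ^ 2 * ∫ x in thinDom ε G, gradSq φ x) →
      -- the Bingham variational inequality
      (∀ v : V3 → V3, ContDiff ℝ 1 v →
        (∀ i, tsupport (fun x => v x i) ⊆ thinDom ε G) → (∀ x, divg v x = 0) →
        μ * ε ^ 2 * ∫ x in thinDom ε G, gradInner u (fun z => v z - u z) x
          + g * ε * ∫ x in thinDom ε G, gradNorm v x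
          - g * ε * ∫ x in thinDom ε G, gradNorm u x
        ≥ ∫ x in thinDom ε G, ∑ i, f x i * (v x i - u x i)) →
      -- conclusions: `ε|||∇u_ε||| ≤ C'` and `|||u_ε||| ≤ C'`
      ε * Real.sqrt (ε⁻¹ * ∫ x in thinDom ε G, gradSq u x) ≤ C'
        ∧ Real.sqrt (ε⁻¹ * ∫ x in thinDom ε G, vnormSq u x) ≤ C' :=
  bingham_apriori_estimates_general G1 μ g C Cp hμ hC G hGub
end
end

section
/- For every φ ∈ L^p(Ω_ε) with 1 ≤ p < ∞, T_ε(φ) ∈ L^p(ω × Y*) and ‖T_ε(φ)‖_{L^p(ω×Y*)} = (L₁L₂)^{1/p} · ε^{-1/p} ‖φ‖_{L^p(Ω⁰_ε)} ≤ (L₁L₂)^{1/p} · ε^{-1/p} ‖φ‖_{L^p(Ω_ε)}. -/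
open MeasureTheory Set Filter
open scoped Classical
noncomputable section

/-!
Let `Φ(x̂, y) = ε(n L + y)` (`unfoldMap`) with `n = [x̂/ε]_L`, so that `T_ε φ = φ ∘ Φ` on
`ω^ε × Y*`. Over the `n`-th cell, `Φ` forgets `x̂` and is the affine map `y ↦ ε(nL + y)`, which by
periodicity of `G` carries `Y*` onto the part of `Ω_ε` above that cell and divides volumes by
`ε³`; integrating out `x̂` over the cell contributes its area `ε²L₁L₂`. Summing over the cells
(which tile `ω^ε`, resp. `Ω⁰_ε`, up to grid lines), the push-forward of Lebesgue measure on
`ω^ε × Y*` under `Φ` is `L₁L₂/ε` times Lebesgue measure on `Ω⁰_ε`. Every claim about `T_ε φ`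
is then a change of variables along `Φ`.
-/

namespace ThinDomain

open scoped ENNReal

variable {ε L1 L2 : ℝ} {G : V2 → ℝ}

def cellIndex (ε L1 L2 : ℝ) (xh : V2) : ℤ × ℤ := (⌊xh 0 / (ε * L1)⌋, ⌊xh 1 / (ε * L2)⌋)

def admissibleCells (ε L1 L2 : ℝ) : Set (ℤ × ℤ) :=
  {n | 0 ≤ n.1 ∧ 0 ≤ n.2 ∧ ε * L1 * ((n.1 : ℝ) + 1) ≤ 1 ∧ ε * L2 * ((n.2 : ℝ) + 1) ≤ 1}

/-- Open cells: they miss the grid lines `x̂ᵢ ∈ εLᵢℤ`, a null set, so the decompositions of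
`ω^ε` and `Ω⁰_ε` into cells below hold only almost everywhere. -/
def horizCell (ε L1 L2 : ℝ) (n : ℤ × ℤ) : Set V2 :=
  univ.pi ![Ioo (ε * L1 * n.1) (ε * L1 * (n.1 + 1)), Ioo (ε * L2 * n.2) (ε * L2 * (n.2 + 1))]

theorem mem_horizCell {n : ℤ × ℤ} {xh : V2} :
    xh ∈ horizCell ε L1 L2 n ↔
      (ε * L1 * n.1 < xh 0 ∧ xh 0 < ε * L1 * (n.1 + 1)) ∧
        ε * L2 * n.2 < xh 1 ∧ xh 1 < ε * L2 * (n.2 + 1) := by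
  simp [horizCell, Fin.forall_fin_two]

def thinCell (ε L1 L2 : ℝ) (G : V2 → ℝ) (n : ℤ × ℤ) : Set V3 :=
  {x | hat x ∈ horizCell ε L1 L2 n ∧ 0 < x 2 ∧ x 2 < ε * G ![x 0 / ε, x 1 / ε]}

def cellShift (L1 L2 : ℝ) (n : ℤ × ℤ) : V3 := ![n.1 * L1, n.2 * L2, 0]

def cellMap (ε L1 L2 : ℝ) (n : ℤ × ℤ) (y : V3) : V3 := ε • (y + cellShift L1 L2 n)

def unfoldMap (ε L1 L2 : ℝ) (q : V2 × V3) : V3 := cellMap ε L1 L2 (cellIndex ε L1 L2 q.1) q.2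

theorem Tunf_eq_indicator (φ : V3 → ℝ) :
    (fun q : V2 × V3 => Tunf ε L1 L2 φ q.1 q.2)
      = {q | cellOK ε L1 L2 q.1}.indicator (φ ∘ unfoldMap ε L1 L2) := by
  ext q
  by_cases h : cellOK ε L1 L2 q.1
  · simp only [Tunf, if_pos h, indicator_of_mem (show q ∈ {q | cellOK ε L1 L2 q.1} from h),
      Function.comp_apply]
    congr 1
    ext i
    fin_cases i <;>
      simp [unfoldMap, cellMap, cellShift, cellIndex, Matrix.vecHead, Matrix.vecTail, add_comm]
  · simp [Tunf, h]

theorem cellIndex_eq_of_mem_horizCell (hε : 0 < ε) (hL1 : 0 < L1) (hL2 : 0 < L2)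
    {n : ℤ × ℤ} {xh : V2} (h : xh ∈ horizCell ε L1 L2 n) : cellIndex ε L1 L2 xh = n := by
  obtain ⟨⟨h1, h2⟩, h3, h4⟩ := mem_horizCell.1 h
  have hc1 : 0 < ε * L1 := by positivity
  have hc2 : 0 < ε * L2 := by positivity
  simp only [cellIndex, Prod.ext_iff, Int.floor_eq_iff, le_div_iff₀ hc1, div_lt_iff₀ hc1,
    le_div_iff₀ hc2, div_lt_iff₀ hc2]
  refine ⟨⟨?_, ?_⟩, ?_, ?_⟩ <;> linarith

theorem pairwise_disjoint_horizCell (hε : 0 < ε) (hL1 : 0 < L1) (hL2 : 0 < L2) :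
    Pairwise (Function.onFun Disjoint (horizCell ε L1 L2)) := fun _ _ hnm =>
  disjoint_left.2 fun _ hn hm => hnm <|
    (cellIndex_eq_of_mem_horizCell hε hL1 hL2 hn).symm.trans
      (cellIndex_eq_of_mem_horizCell hε hL1 hL2 hm)

theorem pairwise_disjoint_thinCell (hε : 0 < ε) (hL1 : 0 < L1) (hL2 : 0 < L2) :
    Pairwise (Function.onFun Disjoint (thinCell ε L1 L2 G)) := fun _ _ hnm =>
  ((pairwise_disjoint_horizCell hε hL1 hL2 hnm).preimage hat).mono (fun _ hx => hx.1)
    (fun _ hx => hx.1)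

theorem mem_horizCell_cellIndex (hε : 0 < ε) (hL1 : 0 < L1) (hL2 : 0 < L2) {xh : V2}
    (h0 : ∀ m : ℤ, xh 0 ≠ ε * L1 * m) (h1 : ∀ m : ℤ, xh 1 ≠ ε * L2 * m) :
    xh ∈ horizCell ε L1 L2 (cellIndex ε L1 L2 xh) := by
  have hc1 : 0 < ε * L1 := by positivity
  have hc2 : 0 < ε * L2 := by positivity
  have a0 := (le_div_iff₀ hc1).1 (Int.floor_le (xh 0 / (ε * L1)))
  have b0 := (div_lt_iff₀ hc1).1 (Int.lt_floor_add_one (xh 0 / (ε * L1)))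
  have a1 := (le_div_iff₀ hc2).1 (Int.floor_le (xh 1 / (ε * L2)))
  have b1 := (div_lt_iff₀ hc2).1 (Int.lt_floor_add_one (xh 1 / (ε * L2)))
  rw [mem_horizCell]
  dsimp only [cellIndex]
  refine ⟨⟨?_, by linarith⟩, ?_, by linarith⟩
  · exact lt_of_le_of_ne (by linarith) fun h => h0 _ (by rw [← h])
  · exact lt_of_le_of_ne (by linarith) fun h => h1 _ (by rw [← h])

theorem volume_setOf_eq_int_mul {ι : Type*} [Fintype ι] (i : ι) (c : ℝ) :
    volume {x : ι → ℝ | ∃ m : ℤ, x i = c * m} = 0 := by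
  have hpre : {x : ι → ℝ | ∃ m : ℤ, x i = c * m}
      = Function.eval i ⁻¹' range fun m : ℤ => c * m := by
    ext; simp [eq_comm]
  rw [hpre]
  exact Measure.pi_eval_preimage_null (fun _ => volume) (i := i)
    ((countable_range fun m : ℤ => c * m).measure_zero volume)

theorem thinDom0_subset_thinDom : thinDom0 ε L1 L2 G ⊆ thinDom ε G := fun _ hx => hx.1

theorem horizCell_subset (hε : 0 < ε) (hL1 : 0 < L1) (hL2 : 0 < L2) {n : ℤ × ℤ}
    (hn : n ∈ admissibleCells ε L1 L2) :
    horizCell ε L1 L2 n ⊆ {xh | xh ∈ omega2 ∧ cellOK ε L1 L2 xh} := by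
  intro xh hxh
  refine ⟨?_, show cellIndex ε L1 L2 xh ∈ admissibleCells ε L1 L2 by
    rwa [cellIndex_eq_of_mem_horizCell hε hL1 hL2 hxh]⟩
  obtain ⟨⟨h1, h2⟩, h3, h4⟩ := mem_horizCell.1 hxh
  obtain ⟨n1, n2, c1, c2⟩ := hn
  have e1 : (0 : ℝ) ≤ n.1 := by exact_mod_cast n1
  have e2 : (0 : ℝ) ≤ n.2 := by exact_mod_cast n2
  exact ⟨by nlinarith, by linarith, by nlinarith, by linarith⟩

theorem omega2_cellOK_ae_eq_iUnion (hε : 0 < ε) (hL1 : 0 < L1) (hL2 : 0 < L2) :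
    {xh | xh ∈ omega2 ∧ cellOK ε L1 L2 xh}
      =ᵐ[volume] ⋃ n : admissibleCells ε L1 L2, horizCell ε L1 L2 n := by
  refine EventuallyLE.antisymm (ae_le_set.2 (measure_mono_null ?_ (measure_union_null
    (volume_setOf_eq_int_mul 0 (ε * L1)) (volume_setOf_eq_int_mul 1 (ε * L2)))))
    (iUnion_subset fun n => horizCell_subset hε hL1 hL2 n.2).eventuallyLE
  rintro xh ⟨⟨-, hok⟩, hnot⟩
  by_contra hgrid
  simp only [mem_union, mem_ofPred_eq, not_or, not_exists] at hgrid
  exact hnot (mem_iUnion.2 ⟨⟨_, hok⟩, mem_horizCell_cellIndex hε hL1 hL2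
    (fun m h => hgrid.1 m h) fun m h => hgrid.2 m h⟩)

theorem thinDom0_ae_eq_iUnion (hε : 0 < ε) (hL1 : 0 < L1) (hL2 : 0 < L2) :
    thinDom0 ε L1 L2 G =ᵐ[volume] ⋃ n : admissibleCells ε L1 L2, thinCell ε L1 L2 G n := by
  refine EventuallyLE.antisymm (ae_le_set.2 (measure_mono_null ?_ (measure_union_null
    (volume_setOf_eq_int_mul 0 (ε * L1)) (volume_setOf_eq_int_mul 1 (ε * L2))))) ?_
  · rintro x ⟨⟨⟨-, hx2, hx2'⟩, hok⟩, hnot⟩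
    by_contra hgrid
    simp only [mem_union, mem_ofPred_eq, not_or, not_exists] at hgrid
    exact hnot (mem_iUnion.2 ⟨⟨_, hok⟩, mem_horizCell_cellIndex hε hL1 hL2
      (fun m h => hgrid.1 m h) (fun m h => hgrid.2 m h), hx2, hx2'⟩)
  · refine (iUnion_subset fun n x hx => ?_).eventuallyLE
    obtain ⟨hω, hok⟩ := horizCell_subset hε hL1 hL2 n.2 hx.1
    exact ⟨⟨hω, hx.2⟩, hok⟩

theorem measurableSet_horizCell (n : ℤ × ℤ) : MeasurableSet (horizCell ε L1 L2 n) :=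
  MeasurableSet.univ_pi fun i => by fin_cases i <;> exact measurableSet_Ioo

theorem measurableSet_thinCell (hG : Measurable G) (n : ℤ × ℤ) :
    MeasurableSet (thinCell ε L1 L2 G n) := by
  have hhat : Measurable hat := by
    refine measurable_pi_lambda _ fun i => ?_
    fin_cases i <;> exact measurable_pi_apply _
  have hGx : Measurable fun x : V3 => ε * G ![x 0 / ε, x 1 / ε] := by
    refine (hG.comp (measurable_pi_lambda _ fun i => ?_)).const_mul ε
    fin_cases i <;> simp only [Fin.zero_eta, Fin.mk_one, Matrix.cons_val_zero,
      Matrix.cons_val_one] <;> fun_prop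
  exact (measurableSet_horizCell n).preimage hhat |>.inter
    ((measurableSet_lt measurable_const (measurable_pi_apply 2)).inter
      (measurableSet_lt (measurable_pi_apply 2) hGx))

theorem measurableSet_Ystar (hG : Measurable G) : MeasurableSet (Ystar L1 L2 G) := by
  have hGy : Measurable fun y : V3 => G ![y 0, y 1] := by
    refine hG.comp (measurable_pi_lambda _ fun i => ?_)
    fin_cases i <;> exact measurable_pi_apply _
  simp only [Ystar, ofPred_and]
  refine .inter ?_ (.inter ?_ (.inter ?_ (.inter ?_ (.inter ?_ ?_)))) <;>
    first
    | exact measurableSet_lt measurable_const (measurable_pi_apply _)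
    | exact measurableSet_lt (measurable_pi_apply _) measurable_const
    | exact measurableSet_lt (measurable_pi_apply _) hGy

theorem measurable_cellIndex : Measurable (cellIndex ε L1 L2) :=
  (((measurable_pi_apply 0).div_const _).floor).prodMk
    (((measurable_pi_apply 1).div_const _).floor)

theorem measurable_cellMap (n : ℤ × ℤ) : Measurable (cellMap ε L1 L2 n) :=
  (measurable_add_const _).const_smul ε

theorem measurable_unfoldMap : Measurable (unfoldMap ε L1 L2) :=
  (measurable_snd.add ((measurable_of_countable (cellShift L1 L2)).comp
    (measurable_cellIndex.comp measurable_fst))).const_smul ε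

theorem measurableSet_cellOK :
    MeasurableSet {q : V2 × V3 | cellOK ε L1 L2 q.1} :=
  (to_countable (admissibleCells ε L1 L2)).measurableSet.preimage
    (measurable_cellIndex.comp measurable_fst)

theorem volume_horizCell (n : ℤ × ℤ) :
    volume (horizCell ε L1 L2 n) = ENNReal.ofReal (ε * L1) * ENNReal.ofReal (ε * L2) := by
  rw [horizCell, volume_pi_pi, Fin.prod_univ_two]
  simp only [Matrix.cons_val_zero, Matrix.cons_val_one, Real.volume_Ioo]
  ring_nf

theorem map_cellMap_volume (hε : 0 < ε) (n : ℤ × ℤ) :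
    (volume : Measure V3).map (cellMap ε L1 L2 n) = ENNReal.ofReal (ε ^ 3)⁻¹ • volume := by
  have hcomp : cellMap ε L1 L2 n = (fun y : V3 => ε • y) ∘ (· + cellShift L1 L2 n) := rfl
  rw [hcomp, ← Measure.map_map (measurable_const_smul ε) (measurable_add_const _),
    map_add_right_eq_self, Measure.map_addHaar_smul _ hε.ne', Module.finrank_fin_fun,
    abs_of_pos (by positivity)]

theorem cellMap_preimage_thinCell (hε : 0 < ε) (hGper : Yper L1 L2 G) (n : ℤ × ℤ) :
    cellMap ε L1 L2 n ⁻¹' thinCell ε L1 L2 G n = Ystar L1 L2 G := by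
  ext y
  have hG : G ![cellMap ε L1 L2 n y 0 / ε, cellMap ε L1 L2 n y 1 / ε] = G ![y 0, y 1] := by
    convert hGper ![y 0, y 1] ![n.1, n.2] using 2
    ext i
    fin_cases i <;> simp [cellMap, cellShift, hε.ne', Matrix.vecHead, Matrix.vecTail]
  simp only [mem_preimage, thinCell, mem_ofPred_eq, hG, mem_horizCell, Ystar]
  simp only [cellMap, cellShift, hat, Pi.smul_apply, Pi.add_apply, smul_eq_mul,
    Matrix.cons_val_zero, Matrix.cons_val_one, Matrix.cons_val_two, Matrix.tail_cons,
    Matrix.head_cons, add_zero]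
  constructor
  · rintro ⟨⟨⟨a1, a2⟩, a3, a4⟩, a5, a6⟩
    refine ⟨?_, ?_, ?_, ?_, ?_, ?_⟩ <;> nlinarith
  · rintro ⟨a1, a2, a3, a4, a5, a6⟩
    refine ⟨⟨⟨?_, ?_⟩, ?_, ?_⟩, ?_, ?_⟩ <;> nlinarith

theorem map_unfoldMap_restrict_horizCell (hε : 0 < ε) (hL1 : 0 < L1) (hL2 : 0 < L2)
    (hG : Measurable G) (hGper : Yper L1 L2 G) (n : ℤ × ℤ) :
    (volume.restrict (horizCell ε L1 L2 n ×ˢ Ystar L1 L2 G)).map (unfoldMap ε L1 L2)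
      = (ENNReal.ofReal (L1 * L2 * ε⁻¹) • volume).restrict (thinCell ε L1 L2 G n) := by
  have hcell : unfoldMap ε L1 L2 =ᵐ[volume.restrict (horizCell ε L1 L2 n ×ˢ Ystar L1 L2 G)]
      cellMap ε L1 L2 n ∘ Prod.snd :=
    (ae_restrict_mem ((measurableSet_horizCell n).prod (measurableSet_Ystar hG))).mono
      fun q hq => by
        simp only [unfoldMap, Function.comp_apply, cellIndex_eq_of_mem_horizCell hε hL1 hL2 hq.1]
  have hconst : ENNReal.ofReal (ε * L1) * ENNReal.ofReal (ε * L2) * ENNReal.ofReal (ε ^ 3)⁻¹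
      = ENNReal.ofReal (L1 * L2 * ε⁻¹) := by
    rw [← ENNReal.ofReal_mul (by positivity), ← ENNReal.ofReal_mul (by positivity)]
    congr 1
    field_simp
  rw [Measure.map_congr hcell, ← Measure.map_map (measurable_cellMap n) measurable_snd,
    Measure.volume_eq_prod, ← Measure.prod_restrict, Measure.map_snd_prod, Measure.map_smul,
    ← cellMap_preimage_thinCell hε hGper n,
    ← Measure.restrict_map (measurable_cellMap n) (measurableSet_thinCell hG n),
    map_cellMap_volume hε, Measure.restrict_apply_univ, volume_horizCell, Measure.restrict_smul,
    Measure.restrict_smul, smul_smul, hconst]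

theorem map_unfoldMap_restrict (hε : 0 < ε) (hL1 : 0 < L1) (hL2 : 0 < L2)
    (hG : Measurable G) (hGper : Yper L1 L2 G) :
    ((volume.restrict (omega2 ×ˢ Ystar L1 L2 G)).restrict {q | cellOK ε L1 L2 q.1}).map
        (unfoldMap ε L1 L2)
      = ENNReal.ofReal (L1 * L2 * ε⁻¹) • volume.restrict (thinDom0 ε L1 L2 G) := by
  have hset : {q | cellOK ε L1 L2 q.1} ∩ omega2 ×ˢ Ystar L1 L2 G
      = {xh | xh ∈ omega2 ∧ cellOK ε L1 L2 xh} ×ˢ Ystar L1 L2 G := by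
    ext q
    simp only [mem_inter_iff, mem_prod, mem_ofPred_eq]
    tauto
  have hcells : {xh | xh ∈ omega2 ∧ cellOK ε L1 L2 xh} ×ˢ Ystar L1 L2 G
      =ᵐ[volume] ⋃ n : admissibleCells ε L1 L2, horizCell ε L1 L2 n ×ˢ Ystar L1 L2 G := by
    rw [← iUnion_prod_const, Measure.volume_eq_prod]
    exact Measure.set_prod_ae_eq (omega2_cellOK_ae_eq_iUnion hε hL1 hL2) ae_eq_rfl
  have hdisj : Pairwise (Function.onFun Disjoint
      fun n : admissibleCells ε L1 L2 => horizCell ε L1 L2 n ×ˢ Ystar L1 L2 G) :=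
    fun _ _ h =>
      (pairwise_disjoint_horizCell hε hL1 hL2 (Subtype.val_injective.ne h)).set_prod_left _ _
  rw [Measure.restrict_restrict measurableSet_cellOK, hset, Measure.restrict_congr_set hcells,
    Measure.restrict_iUnion hdisj fun n =>
      (measurableSet_horizCell n).prod (measurableSet_Ystar hG),
    Measure.map_sum measurable_unfoldMap.aemeasurable]
  simp_rw [map_unfoldMap_restrict_horizCell hε hL1 hL2 hG hGper]
  rw [← Measure.restrict_iUnion (s := fun n : admissibleCells ε L1 L2 => thinCell ε L1 L2 G n)
      (fun _ _ h => pairwise_disjoint_thinCell hε hL1 hL2 (Subtype.val_injective.ne h))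
      fun n => measurableSet_thinCell hG n,
    Measure.restrict_smul, ← Measure.restrict_congr_set (thinDom0_ae_eq_iUnion hε hL1 hL2)]

theorem memLp_Tunf {p : ℝ≥0∞} {g : V3 → ℝ} (hε : 0 < ε) (hL1 : 0 < L1) (hL2 : 0 < L2)
    (hG : Measurable G) (hGper : Yper L1 L2 G)
    (hg : MemLp g p (volume.restrict (thinDom0 ε L1 L2 G))) :
    MemLp (fun q : V2 × V3 => Tunf ε L1 L2 g q.1 q.2) p
      (volume.restrict (omega2 ×ˢ Ystar L1 L2 G)) := by
  rw [Tunf_eq_indicator, memLp_indicator_iff_restrict measurableSet_cellOK]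
  refine MemLp.comp_of_map ?_ measurable_unfoldMap.aemeasurable
  rw [map_unfoldMap_restrict hε hL1 hL2 hG hGper]
  exact hg.smul_measure ENNReal.ofReal_ne_top

theorem integral_Tunf {g : V3 → ℝ} (hε : 0 < ε) (hL1 : 0 < L1) (hL2 : 0 < L2)
    (hG : Measurable G) (hGper : Yper L1 L2 G)
    (hg : AEStronglyMeasurable g (volume.restrict (thinDom0 ε L1 L2 G))) :
    ∫ q in omega2 ×ˢ Ystar L1 L2 G, Tunf ε L1 L2 g q.1 q.2
      = L1 * L2 * ε⁻¹ * ∫ x in thinDom0 ε L1 L2 G, g x := by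
  have hmap := map_unfoldMap_restrict hε hL1 hL2 hG hGper
  rw [Tunf_eq_indicator, integral_indicator measurableSet_cellOK, Function.comp_def,
    ← integral_map measurable_unfoldMap.aemeasurable (hmap ▸ hg.smul_measure _), hmap,
    integral_smul_measure, ENNReal.toReal_ofReal (by positivity), smul_eq_mul]

theorem abs_Tunf_rpow {p : ℝ} (hp : p ≠ 0) (φ : V3 → ℝ) (xh : V2) (y : V3) :
    |Tunf ε L1 L2 φ xh y| ^ p = Tunf ε L1 L2 (fun x => |φ x| ^ p) xh y := by
  unfold Tunf
  split_ifs <;> simp [Real.zero_rpow hp]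

end ThinDomain

open ThinDomain in
theorem unfold_Lp_norm_general
    (ε L1 L2 p : ℝ) (hε : 0 < ε) (hL1 : 0 < L1) (hL2 : 0 < L2)
    (hp : 1 ≤ p)
    (G : V2 → ℝ) (hGcont : Continuous G) (hGper : Yper L1 L2 G)
    (φ : V3 → ℝ)
    (hφ : MemLp φ (ENNReal.ofReal p) (volume.restrict (thinDom ε G))) :
    MemLp (fun q : V2 × V3 => Tunf ε L1 L2 φ q.1 q.2) (ENNReal.ofReal p)
        (volume.restrict (omega2 ×ˢ Ystar L1 L2 G))
    ∧ (∫ q in omega2 ×ˢ Ystar L1 L2 G, |Tunf ε L1 L2 φ q.1 q.2| ^ p) ^ (1 / p)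
        = (L1 * L2) ^ (1 / p) * (ε⁻¹) ^ (1 / p)
            * (∫ x in thinDom0 ε L1 L2 G, |φ x| ^ p) ^ (1 / p)
    ∧ (∫ q in omega2 ×ˢ Ystar L1 L2 G, |Tunf ε L1 L2 φ q.1 q.2| ^ p) ^ (1 / p)
        ≤ (L1 * L2) ^ (1 / p) * (ε⁻¹) ^ (1 / p)
            * (∫ x in thinDom ε G, |φ x| ^ p) ^ (1 / p) := by
  have hp0 : 0 < p := by linarith
  have hφ0 : MemLp φ (ENNReal.ofReal p) (volume.restrict (thinDom0 ε L1 L2 G)) :=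
    hφ.mono_measure (Measure.restrict_mono thinDom0_subset_thinDom le_rfl)
  have hI : ∫ q in omega2 ×ˢ Ystar L1 L2 G, |Tunf ε L1 L2 φ q.1 q.2| ^ p
      = L1 * L2 * ε⁻¹ * ∫ x in thinDom0 ε L1 L2 G, |φ x| ^ p := by
    simp_rw [abs_Tunf_rpow hp0.ne']
    refine integral_Tunf hε hL1 hL2 hGcont.measurable hGper ?_
    simpa only [Real.norm_eq_abs] using
      (hφ0.1.norm.aemeasurable.pow_const p).aestronglyMeasurable
  have hnorm : (∫ q in omega2 ×ˢ Ystar L1 L2 G, |Tunf ε L1 L2 φ q.1 q.2| ^ p) ^ (1 / p)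
      = (L1 * L2) ^ (1 / p) * (ε⁻¹) ^ (1 / p)
          * (∫ x in thinDom0 ε L1 L2 G, |φ x| ^ p) ^ (1 / p) := by
    rw [hI, Real.mul_rpow (by positivity) (by positivity), Real.mul_rpow (by positivity)
      (by positivity)]
  have hint : Integrable (fun x => |φ x| ^ p) (volume.restrict (thinDom ε G)) := by
    simpa [Real.norm_eq_abs, ENNReal.toReal_ofReal hp0.le] using
      hφ.integrable_norm_rpow (by simpa using hp0) ENNReal.ofReal_ne_top
  refine ⟨memLp_Tunf hε hL1 hL2 hGcont.measurable hGper hφ0, hnorm, hnorm ▸ ?_⟩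
  gcongr
  · exact .of_forall fun _ => by positivity
  · exact thinDom0_subset_thinDom

/-- Lᵖ norms under unfolding: for `1 ≤ p < ∞` and `φ ∈ Lᵖ(Ω_ε)`,
`T_ε(φ) ∈ Lᵖ(ω×Y*)` and
`‖T_ε(φ)‖_{Lᵖ(ω×Y*)} = (L₁L₂)^{1/p} ε^{-1/p} ‖φ‖_{Lᵖ(Ω⁰_ε)} ≤ (L₁L₂)^{1/p} ε^{-1/p} ‖φ‖_{Lᵖ(Ω_ε)}`. -/
theorem unfold_Lp_norm
    (ε L1 L2 G0 G1 p : ℝ) (hε : 0 < ε) (hL1 : 0 < L1) (hL2 : 0 < L2) (hG0 : 0 < G0)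
    (hp : 1 ≤ p)
    (G : V2 → ℝ) (hGcont : Continuous G) (hGper : Yper L1 L2 G)
    (hGlb : ∀ y, G0 ≤ G y) (hGub : ∀ y, G y ≤ G1)
    (φ : V3 → ℝ)
    (hφ : MemLp φ (ENNReal.ofReal p) (volume.restrict (thinDom ε G))) :
    MemLp (fun q : V2 × V3 => Tunf ε L1 L2 φ q.1 q.2) (ENNReal.ofReal p)
        (volume.restrict (omega2 ×ˢ Ystar L1 L2 G))
    ∧ (∫ q in omega2 ×ˢ Ystar L1 L2 G, |Tunf ε L1 L2 φ q.1 q.2| ^ p) ^ (1 / p)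
        = (L1 * L2) ^ (1 / p) * (ε⁻¹) ^ (1 / p)
            * (∫ x in thinDom0 ε L1 L2 G, |φ x| ^ p) ^ (1 / p)
    ∧ (∫ q in omega2 ×ˢ Ystar L1 L2 G, |Tunf ε L1 L2 φ q.1 q.2| ^ p) ^ (1 / p)
        ≤ (L1 * L2) ^ (1 / p) * (ε⁻¹) ^ (1 / p)
            * (∫ x in thinDom ε G, |φ x| ^ p) ^ (1 / p) :=
  unfold_Lp_norm_general ε L1 L2 p hε hL1 hL2 hp G hGcont hGper φ hφ
end
end

section
/- Let U ∈ H¹((0,G₁); L²(ω)³) be the weak limit of the zero-extensions Ũ_ε of the rescaled divergence-free velocities U_ε, where div_ε U_ε := ∂_{x₁}U_ε¹ + ∂_{x₂}U_ε² + (1/ε)∂_{y₃}U_ε³ = 0 and U_ε vanishes on the boundary. Then the third component of U vanishes: U³ = 0. In particular U = (Û, 0). -/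
/-!
Test `U³` against a smooth compactly supported `g` and let `φ` be the primitive of `g` in the
vertical direction, `φ(x) = ∫_{-∞}^{0} g(x + s e₃) ds`, so that `∂₃φ = g`. Since `Ũ_ε` vanishes
near `∂Ω`, integrating by parts and using incompressibility gives
`∫ Ũ_ε³ g = -∫ ∂₃Ũ_ε³ φ = ∫ (ε∂₁Ũ_ε¹ + ε∂₂Ũ_ε²) φ`, which tends to `0` because `ε∂ᵢŨ_ε ⇀ 0`,
while the left side tends to `∫ U³ g`. The boundary condition enters only through this
integration by parts, so no trace argument is needed and `φ` need not vanish on `∂Ω`.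
-/

open MeasureTheory Set Filter
open scoped Classical
noncomputable section

/-- The fixed-height domain `Ω = ω × (0, G₁)`. -/
def OmegaF (G1 : ℝ) : Set V3 := {x | hat x ∈ omega2 ∧ 0 < x 2 ∧ x 2 < G1}

/-- Matrix of partial derivatives in direction `i` of a vector field. -/
def pdV (i : Fin 3) (u : V3 → V3) (x : V3) : V3 := fun j => pd3 i (fun z => u z j) x

/-- Weak convergence in `L²(S)³` of a sequence of vector fields. -/
def WeakL2V (S : Set V3) (fn : ℕ → V3 → V3) (f : V3 → V3) : Prop :=
  ∀ g : V3 → V3, (∀ i, MemLp (fun x => g x i) 2 (volume.restrict S)) →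
    Tendsto (fun n => ∫ x in S, ∑ i, fn n x i * g x i) atTop
      (nhds (∫ x in S, ∑ i, f x i * g x i))

open Topology Metric

section PrimitiveAlong

variable {E F : Type*} [NormedAddCommGroup E] [NormedSpace ℝ E]
  [NormedAddCommGroup F] [NormedSpace ℝ F]

theorem isClosedEmbedding_add_smul (x : E) {v : E} (hv : v ≠ 0) :
    IsClosedEmbedding fun s : ℝ => x + s • v :=
  (Homeomorph.addLeft x).isClosedEmbedding.comp (isClosedEmbedding_smul_left hv)

def primitiveAlong (g : E → F) (v x : E) : F := ∫ s in Iic (0 : ℝ), g (x + s • v)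

variable [ProperSpace E] {g : E → F} {v : E}

theorem hasFDerivAt_primitiveAlong (hg : ContDiff ℝ 1 g) (hgc : HasCompactSupport g) (hv : v ≠ 0)
    (x₀ : E) :
    HasFDerivAt (primitiveAlong g v) (∫ s in Iic (0 : ℝ), fderiv ℝ g (x₀ + s • v)) x₀ := by
  have hg' : Continuous (fderiv ℝ g) := hg.continuous_fderiv one_ne_zero
  obtain ⟨C, hC⟩ := (hgc.fderiv ℝ).exists_bound_of_continuous hg'
  -- For `x` within distance 1 of `x₀`, `fderiv g (x + s • v)` vanishes unless `s ∈ K`.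
  set K := (fun s : ℝ => x₀ + s • v) ⁻¹' cthickening 1 (tsupport g)
  have hK : IsCompact K :=
    (isClosedEmbedding_add_smul x₀ hv).isCompact_preimage hgc.isCompact.cthickening
  refine hasFDerivAt_integral_of_dominated_of_fderiv_le (ball_mem_nhds x₀ one_pos)
    (F := fun x s => g (x + s • v)) (F' := fun x s => fderiv ℝ g (x + s • v))
    (bound := K.indicator fun _ => C) ?_ ?_ ?_ ?_ ?_ ?_
  · exact Eventually.of_forall fun x => (hg.continuous.comp (by fun_prop)).aestronglyMeasurable
  · exact ((hg.continuous.comp (by fun_prop)).integrable_of_hasCompactSupport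
      (hgc.comp_isClosedEmbedding (isClosedEmbedding_add_smul x₀ hv))).integrableOn
  · exact (hg'.comp (by fun_prop)).aestronglyMeasurable
  · refine Eventually.of_forall fun s x hx => ?_
    by_cases hs : s ∈ K
    · simpa [indicator_of_mem hs] using hC _
    · have hgx : x + s • v ∉ tsupport g := fun hmem => hs <|
        mem_cthickening_of_dist_le _ _ 1 _ hmem (by simpa [dist_comm] using (mem_ball.1 hx).le)
      simp [indicator_of_notMem hs, fderiv_of_notMem_tsupport ℝ hgx]
  · exact ((integrable_indicator_iff hK.measurableSet).2
      (integrableOn_const hK.measure_ne_top)).integrableOn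
  · exact Eventually.of_forall fun s x _ =>
      ((hg.differentiable one_ne_zero _).hasFDerivAt).comp x ((hasFDerivAt_id x).add_const _)

theorem fderiv_primitiveAlong_apply [CompleteSpace F] (hg : ContDiff ℝ 1 g)
    (hgc : HasCompactSupport g) (hv : v ≠ 0) (x : E) : fderiv ℝ (primitiveAlong g v) x v = g x := by
  set ψ : ℝ → F := fun s => g (x + s • v)
  have hψ : ContDiff ℝ 1 ψ := hg.comp (by fun_prop)
  have hψc : HasCompactSupport ψ := hgc.comp_isClosedEmbedding (isClosedEmbedding_add_smul x hv)
  have hderiv (s : ℝ) : deriv ψ s = fderiv ℝ g (x + s • v) v := by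
    have hline : HasDerivAt (fun s : ℝ => x + s • v) v s := by
      simpa using ((hasDerivAt_id s).smul_const v).const_add x
    exact ((hg.differentiable one_ne_zero _).hasFDerivAt.comp_hasDerivAt s hline).deriv
  have hint : Integrable (fun s : ℝ => fderiv ℝ g (x + s • v)) :=
    ((hg.continuous_fderiv one_ne_zero).comp (by fun_prop)).integrable_of_hasCompactSupport
      ((hgc.fderiv ℝ).comp_isClosedEmbedding (isClosedEmbedding_add_smul x hv))
  rw [(hasFDerivAt_primitiveAlong hg hgc hv x).fderiv,
    ContinuousLinearMap.integral_apply hint.integrableOn]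
  simp_rw [← hderiv]
  simpa [ψ] using hψc.integral_Iic_deriv_eq hψ 0

end PrimitiveAlong

section IntegrationByParts

variable {E : Type*} [NormedAddCommGroup E] [NormedSpace ℝ E] [FiniteDimensional ℝ E]
  [MeasurableSpace E] [BorelSpace E] {μ : Measure E} [μ.IsAddHaarMeasure]

theorem setIntegral_mul_fderiv_eq_neg_of_tsupport_subset {f φ : E → ℝ} {S : Set E} {v : E}
    (hf : ContDiff ℝ 1 f) (hfc : HasCompactSupport f) (hfS : tsupport f ⊆ S)
    (hφ : Differentiable ℝ φ) (hφv : Continuous fun x => fderiv ℝ φ x v) :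
    ∫ x in S, f x * fderiv ℝ φ x v ∂μ = -∫ x in S, fderiv ℝ f x v * φ x ∂μ := by
  have hout {x} (hx : x ∉ S) : x ∉ tsupport f := fun h => hx (hfS h)
  rw [setIntegral_eq_integral_of_forall_compl_eq_zero fun x hx => by
      simp [image_eq_zero_of_notMem_tsupport (hout hx)],
    setIntegral_eq_integral_of_forall_compl_eq_zero fun x hx => by
      simp [fderiv_of_notMem_tsupport ℝ (hout hx)]]
  have hf' : Continuous fun x => fderiv ℝ f x v :=
    (hf.continuous_fderiv one_ne_zero).clm_apply continuous_const
  exact integral_mul_fderiv_eq_neg_fderiv_mul_of_integrable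
    ((hf'.mul hφ.continuous).integrable_of_hasCompactSupport (hfc.fderiv_apply ℝ v).mul_right)
    ((hf.continuous.mul hφv).integrable_of_hasCompactSupport hfc.mul_right)
    ((hf.continuous.mul hφ.continuous).integrable_of_hasCompactSupport hfc.mul_right)
    (fun x _ => hf.differentiable one_ne_zero x) (fun x _ => hφ x)

end IntegrationByParts

theorem Continuous.memLp_restrict_of_isBounded {X E : Type*} [PseudoMetricSpace X] [ProperSpace X]
    [MeasurableSpace X] [OpensMeasurableSpace X] {μ : Measure X} [IsFiniteMeasureOnCompacts μ]
    [NormedAddCommGroup E] {f : X → E} (hf : Continuous f) {S : Set X}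
    (hS : Bornology.IsBounded S) (p : ENNReal) : MemLp f p (μ.restrict S) := by
  have hK : IsCompact (closure S) := hS.isCompact_closure
  obtain ⟨C, hC⟩ := hK.exists_bound_of_continuousOn hf.continuousOn
  have : IsFiniteMeasure (μ.restrict (closure S)) :=
    isFiniteMeasure_restrict.2 hK.measure_ne_top
  exact (MemLp.of_bound hf.aestronglyMeasurable C
    (ae_restrict_of_forall_mem isClosed_closure.measurableSet hC)).mono_measure
    (Measure.restrict_mono subset_closure le_rfl)

theorem measurableSet_omegaF (G1 : ℝ) : MeasurableSet (OmegaF G1) := by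
  simp only [OmegaF, omega2, hat, mem_ofPred_eq, Matrix.cons_val_zero, Matrix.cons_val_one]
  measurability

theorem isBounded_omegaF (G1 : ℝ) : Bornology.IsBounded (OmegaF G1) := by
  refine (isBounded_Icc (0 : V3) fun _ => max 1 G1).subset fun x hx => ?_
  simp only [OmegaF, omega2, hat, mem_ofPred_eq, Matrix.cons_val_zero, Matrix.cons_val_one] at hx
  obtain ⟨⟨h0, h0', h1, h1'⟩, h2, h2'⟩ := hx
  have h1G := le_max_left 1 G1
  have hG := le_max_right 1 G1
  refine ⟨fun i => ?_, fun i => ?_⟩ <;> fin_cases i <;>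
    simp only [Pi.zero_apply, Fin.zero_eta, Fin.mk_one, Fin.reduceFinMk] <;> linarith

theorem integrable_pd3_mul {f φ : V3 → ℝ} (hf : ContDiff ℝ 1 f) (hfc : HasCompactSupport f)
    (hφ : Continuous φ) (i : Fin 3) : Integrable (fun x => pd3 i f x * φ x) :=
  (((hf.continuous_fderiv one_ne_zero).clm_apply continuous_const).mul hφ
    ).integrable_of_hasCompactSupport (hfc.fderiv_apply ℝ _).mul_right

theorem setIntegral_mul_pd3_two_eq_of_scaled_div_eq_zero {S : Set V3} (hS : MeasurableSet S)
    {ε : ℝ} {u : V3 → V3} (hu : ContDiff ℝ 1 u) (huc : ∀ i, HasCompactSupport fun x => u x i)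
    (huS : tsupport (fun x => u x 2) ⊆ S)
    (hdiv : ∀ x ∈ S, ε * pd3 0 (fun z => u z 0) x + ε * pd3 1 (fun z => u z 1) x
      + pd3 2 (fun z => u z 2) x = 0)
    {φ : V3 → ℝ} (hφ : Differentiable ℝ φ) (hφ₂ : Continuous (pd3 2 φ)) :
    ∫ x in S, u x 2 * pd3 2 φ x =
      (∫ x in S, ε * pd3 0 (fun z => u z 0) x * φ x) +
        ∫ x in S, ε * pd3 1 (fun z => u z 1) x * φ x := by
  have hui (i : Fin 3) : ContDiff ℝ 1 fun x => u x i := contDiff_pi.1 hu i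
  have hint (i : Fin 3) : IntegrableOn (fun x => ε * pd3 i (fun z => u z i) x * φ x) S := by
    simpa only [mul_assoc] using
      ((integrable_pd3_mul (hui i) (huc i) hφ.continuous i).const_mul ε).integrableOn
  have hparts : ∫ x in S, u x 2 * pd3 2 φ x = -∫ x in S, pd3 2 (fun z => u z 2) x * φ x :=
    setIntegral_mul_fderiv_eq_neg_of_tsupport_subset (hui 2) (huc 2) huS hφ hφ₂
  rw [hparts, ← integral_add (hint 0) (hint 1), ← integral_neg]
  refine setIntegral_congr_fun hS fun x hx => ?_
  linear_combination -φ x * hdiv x hx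

theorem WeakL2V.tendsto_setIntegral_mul {S : Set V3} {fn : ℕ → V3 → V3} {f : V3 → V3}
    (h : WeakL2V S fn f) (k : Fin 3) {φ : V3 → ℝ} (hφ : MemLp φ 2 (volume.restrict S)) :
    Tendsto (fun n => ∫ x in S, fn n x k * φ x) atTop (𝓝 (∫ x in S, f x k * φ x)) := by
  have hsingle (i : Fin 3) : MemLp (fun x => (Pi.single k (φ x) : V3) i) 2 (volume.restrict S) := by
    rcases eq_or_ne i k with rfl | hi
    · simpa using hφ
    · simp [Pi.single_eq_of_ne hi]
  simpa [Pi.single_apply] using h (fun x => Pi.single k (φ x)) hsingle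

theorem limit_third_component_vanishes_general
    (G1 : ℝ)
    (εn : ℕ → ℝ)
    (Un : ℕ → V3 → V3)
    (hreg : ∀ n, ContDiff ℝ 1 (Un n))
    (hsupp : ∀ n i, tsupport (fun x => Un n x i) ⊆ OmegaF G1)
    -- incompressibility: ε∂₁Ũ¹ + ε∂₂Ũ² + ∂₃Ũ³ = 0
    (hdiv : ∀ n, ∀ x ∈ OmegaF G1,
      εn n * pd3 0 (fun z => Un n z 0) x + εn n * pd3 1 (fun z => Un n z 1) x
        + pd3 2 (fun z => Un n z 2) x = 0)
    (U : V3 → V3)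
    (hUmem : ∀ i, MemLp (fun x => U x i) 2 (volume.restrict (OmegaF G1)))
    (hUconv : WeakL2V (OmegaF G1) Un U)
    -- ε ∂_{x_i}Ũ_ε ⇀ 0, i = 1,2
    (hx1 : WeakL2V (OmegaF G1) (fun n x => εn n • pdV 0 (Un n) x) (fun _ => 0))
    (hx2 : WeakL2V (OmegaF G1) (fun n x => εn n • pdV 1 (Un n) x) (fun _ => 0)) :
    ∀ᵐ x ∂(volume.restrict (OmegaF G1)), U x 2 = 0 := by
  have hΩ := isBounded_omegaF G1
  have : IsFiniteMeasure (volume.restrict (OmegaF G1)) :=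
    isFiniteMeasure_restrict.2 hΩ.measure_lt_top.ne
  have hUnc (n i) : HasCompactSupport fun x => Un n x i :=
    isCompact_of_isClosed_isBounded (isClosed_tsupport _) (hΩ.subset (hsupp n i))
  refine ae_eq_zero_of_integral_contDiff_smul_eq_zero
    ((hUmem 2).integrable one_le_two).locallyIntegrable fun g hg hgc => ?_
  have hg1 : ContDiff ℝ 1 g := hg.of_le (by norm_cast)
  have he₃ : (Pi.single 2 1 : V3) ≠ 0 := by simp
  set φ := primitiveAlong g (Pi.single 2 1 : V3)
  have hφ : Differentiable ℝ φ := fun x =>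
    (hasFDerivAt_primitiveAlong hg1 hgc he₃ x).differentiableAt
  have hφ₂ : pd3 2 φ = g := funext (fderiv_primitiveAlong_apply hg1 hgc he₃)
  have hφL2 : MemLp φ 2 (volume.restrict (OmegaF G1)) :=
    hφ.continuous.memLp_restrict_of_isBounded hΩ 2
  have hlim := hUconv.tendsto_setIntegral_mul 2 (hg.continuous.memLp_of_hasCompactSupport hgc)
  have hzero : Tendsto (fun n => ∫ x in OmegaF G1, Un n x 2 * g x) atTop (𝓝 0) := by
    have h := (hx1.tendsto_setIntegral_mul 0 hφL2).add (hx2.tendsto_setIntegral_mul 1 hφL2)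
    simp only [Pi.zero_apply, zero_mul, integral_zero, add_zero] at h
    refine h.congr fun n => ?_
    rw [← hφ₂, setIntegral_mul_pd3_two_eq_of_scaled_div_eq_zero (measurableSet_omegaF G1) (hreg n)
      (hUnc n) (hsupp n 2) (hdiv n) hφ (hφ₂ ▸ hg.continuous)]
    rfl
  simpa only [smul_eq_mul, mul_comm] using tendsto_nhds_unique hlim hzero

/-- if the rescaled velocities are divergence free in the sense
`ε∂_{x₁}Ũ_ε¹ + ε∂_{x₂}Ũ_ε² + ∂_{y₃}Ũ_ε³ = 0`, vanish on the boundary, and converge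
weakly (together with their vertical derivatives) to `U` (resp. `Z`), then the third
component of the limit vanishes: `U³ = 0` a.e. in `Ω`, i.e. `U = (Û, 0)`. -/
theorem limit_third_component_vanishes
    (G1 : ℝ) (hG1 : 0 < G1)
    (εn : ℕ → ℝ) (hεpos : ∀ n, 0 < εn n) (hεto : Tendsto εn atTop (nhds 0))
    (Un : ℕ → V3 → V3)
    (hreg : ∀ n, ContDiff ℝ 1 (Un n))
    (hsupp : ∀ n i, tsupport (fun x => Un n x i) ⊆ OmegaF G1)
    -- incompressibility: ε∂₁Ũ¹ + ε∂₂Ũ² + ∂₃Ũ³ = 0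
    (hdiv : ∀ n, ∀ x ∈ OmegaF G1,
      εn n * pd3 0 (fun z => Un n z 0) x + εn n * pd3 1 (fun z => Un n z 1) x
        + pd3 2 (fun z => Un n z 2) x = 0)
    (U Z : V3 → V3)
    (hUmem : ∀ i, MemLp (fun x => U x i) 2 (volume.restrict (OmegaF G1)))
    (hZmem : ∀ i, MemLp (fun x => Z x i) 2 (volume.restrict (OmegaF G1)))
    (hUconv : WeakL2V (OmegaF G1) Un U)
    (hZconv : WeakL2V (OmegaF G1) (fun n => pdV 2 (Un n)) Z)
    -- ε ∂_{x_i}Ũ_ε ⇀ 0, i = 1,2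
    (hx1 : WeakL2V (OmegaF G1) (fun n x => εn n • pdV 0 (Un n) x) (fun _ => 0))
    (hx2 : WeakL2V (OmegaF G1) (fun n x => εn n • pdV 1 (Un n) x) (fun _ => 0)) :
    ∀ᵐ x ∂(volume.restrict (OmegaF G1)), U x 2 = 0 :=
  limit_third_component_vanishes_general G1 εn Un hreg hsupp hdiv U hUmem hUconv hx1 hx2
end
end
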